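/- arXiv:math/9808106 — 2 statements merged into one kernel-verified Lean document; each statement's English description precedes it below -/
import Mathlib

section
/- Let W be a finite increasing exhaustive filtration of a finite-dimensional vector space V and let N : V → V be a nilpotent endomorphism which preserves W (N(W_j) ⊆ W_j for all j). Then there exists at most one increasing filtration M of V (the relative weight filtration rel W(N,W)) with the following two properties: (i) N(M_j) ⊆ M_{j-2} for each index j; (ii) for each index k, the filtration induced by M on Gr^W_k, namely M_j Gr^W_k := (M_j ∩ W_k + W_{k-1})/W_{k-1}, equals the shifted monodromy weight filtration W(N_k)[-k], i.e. M_j Gr^W_k = W(N_k)_{j-k} for all j, where N_k : Gr^W_k → Gr^W_k is the endomorphism induced by N. -/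
open Submodule

noncomputable section

variable {K V : Type*} [Field K] [AddCommGroup V] [Module K V]

/-- `M` is a relative weight filtration for `(N, W)`: it is a finite increasing
filtration with `N(M_j) ⊆ M_{j-2}` which induces on each `Gr^W_k` the monodromy weight
filtration of the induced endomorphism `N_k`, shifted by `k`.  All subspaces of
`Gr^W_k = W_k/W_{k-1}` are represented by their preimages
`(M_j ∩ W_k) + W_{k-1}` in `V`, and the axioms of the (shifted) monodromy weight
filtration of `N_k` are expressed on representatives. -/
def IsRelWeightFilt (N : Module.End K V) (W M : ℤ → Submodule K V) : Prop :=
  (∀ j : ℤ, M j ≤ M (j + 1)) ∧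
  (∃ a : ℤ, M a = ⊥) ∧ (∃ b : ℤ, M b = ⊤) ∧
  (∀ j : ℤ, (M j).map N ≤ M (j - 2)) ∧
  ∀ k : ℤ,
    (∀ j : ℤ, (M j ⊓ W k ⊔ W (k - 1)).map N ≤ M (j - 2) ⊓ W k ⊔ W (k - 1)) ∧
    ∀ j : ℤ, 0 ≤ j →
      ((∀ v ∈ M (k + j) ⊓ W k ⊔ W (k - 1),
          (N ^ j.toNat) v ∈ M (k - j - 1) ⊓ W k ⊔ W (k - 1) →
          v ∈ M (k + j - 1) ⊓ W k ⊔ W (k - 1)) ∧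
       M (k - j) ⊓ W k ⊔ W (k - 1) ≤
         (M (k + j) ⊓ W k ⊔ W (k - 1)).map (N ^ j.toNat) ⊔
           (M (k - j - 1) ⊓ W k ⊔ W (k - 1)))

private lemma pow_mem_shift (M : ℤ → Submodule K V) (N : Module.End K V)
    (h : ∀ j : ℤ, (M j).map N ≤ M (j - 2)) :
    ∀ (t : ℕ) (j : ℤ), ∀ v ∈ M j, (N ^ t) v ∈ M (j - 2 * t) := by
  intro t
  induction t with
  | zero => intro j v hv; simpa using hv
  | succ t ih =>
    intro j v hv
    have h0 : N v ∈ M (j - 2) := h j ⟨v, hv, rfl⟩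
    have h1 := ih (j - 2) (N v) h0
    have e : (N ^ (t + 1)) v = (N ^ t) (N v) := by rw [pow_succ]; rfl
    rw [e]
    convert h1 using 2
    push_cast; ring

private lemma pow_mem_pres (W : ℤ → Submodule K V) (N : Module.End K V)
    (h : ∀ j : ℤ, (W j).map N ≤ W j) :
    ∀ (t : ℕ) (j : ℤ), ∀ v ∈ W j, (N ^ t) v ∈ W j := by
  intro t
  induction t with
  | zero => intro j v hv; simpa using hv
  | succ t ih =>
    intro j v hv
    have h0 : N v ∈ W j := h j ⟨v, hv, rfl⟩
    have h1 := ih j (N v) h0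
    have e : (N ^ (t + 1)) v = (N ^ t) (N v) := by rw [pow_succ]; rfl
    rw [e]; exact h1

/-- Claim C: an "injectivity" property of relative weight filtrations, proved by
induction up the `W`-filtration. -/
private lemma claimC (W M : ℤ → Submodule K V) (N : Module.End K V)
    (hWmono : Monotone W) (a : ℤ) (hWa : W a = ⊥)
    (hpres : ∀ j : ℤ, (W j).map N ≤ W j)
    (hMmono : Monotone M)
    (hN2 : ∀ j : ℤ, (M j).map N ≤ M (j - 2))
    (hax1 : ∀ k j : ℤ, 0 ≤ j → ∀ v ∈ M (k + j) ⊓ W k ⊔ W (k - 1),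
        (N ^ j.toNat) v ∈ M (k - j - 1) ⊓ W k ⊔ W (k - 1) →
        v ∈ M (k + j - 1) ⊓ W k ⊔ W (k - 1)) :
    ∀ (k p q : ℤ), 1 ≤ q → q ≤ p → ∀ v, v ∈ W k → v ∈ M (k + p) →
      (N ^ q.toNat) v ∈ M (k + p - 2 * q - 1) → v ∈ M (k + p - 1) := by
  suffices H : ∀ (n : ℕ) (k : ℤ), k ≤ a + n → ∀ p q : ℤ, 1 ≤ q → q ≤ p → ∀ v, v ∈ W k →
      v ∈ M (k + p) → (N ^ q.toNat) v ∈ M (k + p - 2 * q - 1) → v ∈ M (k + p - 1) by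
    intro k p q hq hpq v hvW hvM hNv
    exact H (k - a).toNat k (by omega) p q hq hpq v hvW hvM hNv
  intro n
  induction n with
  | zero =>
    intro k hk p q _ _ v hvW _ _
    have hk' : k ≤ a := by push_cast at hk; omega
    have : v ∈ W a := hWmono hk' hvW
    rw [hWa] at this
    rw [Submodule.mem_bot] at this
    rw [this]
    exact zero_mem _
  | succ n ih =>
    intro k hk p q hq hpq v hvW hvM hNv
    by_cases hk' : k ≤ a + n
    · exact ih k hk' p q hq hpq v hvW hvM hNv
    have hk1 : k - 1 ≤ a + n := by push_cast at hk; omega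
    -- N^p v ∈ M (k - p - 1)
    have hNp : (N ^ p.toNat) v ∈ M (k - p - 1) := by
      have h1 : (N ^ (p - q).toNat) ((N ^ q.toNat) v)
          ∈ M (k + p - 2 * q - 1 - 2 * (p - q).toNat) :=
        pow_mem_shift M N hN2 _ _ _ hNv
      have e : (N ^ (p - q).toNat) ((N ^ q.toNat) v) = (N ^ p.toNat) v := by
        rw [← Module.End.mul_apply, ← pow_add]
        have e3 : (p - q).toNat + q.toNat = p.toNat := by omega
        rw [e3]
      have e2 : k + p - 2 * q - 1 - 2 * ((p - q).toNat : ℤ) = k - p - 1 := by omega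
      rw [e, e2] at h1
      exact h1
    have hNpW : (N ^ p.toNat) v ∈ W k := pow_mem_pres W N hpres _ _ _ hvW
    have hC := hax1 k p (by omega) v
        (Submodule.mem_sup_left (Submodule.mem_inf.2 ⟨hvM, hvW⟩))
        (Submodule.mem_sup_left (Submodule.mem_inf.2 ⟨hNp, hNpW⟩))
    rcases Submodule.mem_sup.1 hC with ⟨u, hu, w, hw, huw⟩
    have hw' : w = v - u := by rw [← huw]; abel
    have huM : u ∈ M (k + p - 1) := (Submodule.mem_inf.1 hu).1
    have hwM : w ∈ M (k + p) := by
      rw [hw']; exact sub_mem hvM (hMmono (by omega) huM)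
    have hNu : (N ^ q.toNat) u ∈ M (k + p - 2 * q - 1) := by
      have := pow_mem_shift M N hN2 q.toNat (k + p - 1) u huM
      have e : k + p - 1 - 2 * (q.toNat : ℤ) = k + p - 2 * q - 1 := by omega
      rwa [e] at this
    have hNw : (N ^ q.toNat) w ∈ M (k + p - 2 * q - 1) := by
      rw [hw', map_sub]
      exact sub_mem hNv hNu
    have hwM2 : w ∈ M ((k - 1) + (p + 1)) := by
      have e : (k - 1) + (p + 1) = k + p := by ring
      rw [e]; exact hwM
    have hNw2 : (N ^ q.toNat) w ∈ M ((k - 1) + (p + 1) - 2 * q - 1) := by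
      have e : (k - 1) + (p + 1) - 2 * q - 1 = k + p - 2 * q - 1 := by ring
      rw [e]; exact hNw
    have hwfin := ih (k - 1) hk1 (p + 1) q hq (by omega) w hw hwM2 hNw2
    have e : (k - 1) + (p + 1) - 1 = k + p - 1 := by ring
    rw [e] at hwfin
    rw [← huw]
    exact add_mem huM hwfin

/-- Descent corollary of Claim C: a kernel-type characterization of the upper part. -/
private lemma claimC' (W M : ℤ → Submodule K V) (N : Module.End K V)
    (hWmono : Monotone W) (a : ℤ) (hWa : W a = ⊥)
    (hpres : ∀ j : ℤ, (W j).map N ≤ W j)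
    (hMmono : Monotone M) (b : ℤ) (hMb : M b = ⊤)
    (hN2 : ∀ j : ℤ, (M j).map N ≤ M (j - 2))
    (hax1 : ∀ k j : ℤ, 0 ≤ j → ∀ v ∈ M (k + j) ⊓ W k ⊔ W (k - 1),
        (N ^ j.toNat) v ∈ M (k - j - 1) ⊓ W k ⊔ W (k - 1) →
        v ∈ M (k + j - 1) ⊓ W k ⊔ W (k - 1)) :
    ∀ (k ℓ : ℤ), 0 ≤ ℓ → ∀ v, v ∈ W k → (N ^ (ℓ + 1).toNat) v ∈ M (k - ℓ - 2) →
      v ∈ M (k + ℓ) := by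
  intro k ℓ hℓ v hvW hNv
  have key : ∀ (d : ℕ), ∀ v, v ∈ W k → v ∈ M (k + ℓ + d) →
      (N ^ (ℓ + 1).toNat) v ∈ M (k - ℓ - 2) → v ∈ M (k + ℓ) := by
    intro d
    induction d with
    | zero => intro v _ hvM _; simpa using hvM
    | succ d ihd =>
      intro v hvW hvM hNv
      apply ihd v hvW ?_ hNv
      have h1 : v ∈ M (k + (ℓ + d + 1)) := by
        have e : k + (ℓ + d + 1) = k + ℓ + (d + 1 : ℕ) := by push_cast; ring
        rw [e]; exact hvM
      have h2 : (N ^ (ℓ + 1).toNat) v ∈ M (k + (ℓ + d + 1) - 2 * (ℓ + 1) - 1) :=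
        hMmono (by omega) hNv
      have h3 := claimC W M N hWmono a hWa hpres hMmono hN2 hax1 k (ℓ + d + 1) (ℓ + 1)
        (by omega) (by omega) v hvW h1 h2
      have e : k + (ℓ + d + 1) - 1 = k + ℓ + d := by ring
      rw [e] at h3
      exact h3
  apply key (b - (k + ℓ)).toNat v hvW ?_ hNv
  have hb : b ≤ k + ℓ + (b - (k + ℓ)).toNat := by omega
  have : M b ≤ M (k + ℓ + (b - (k + ℓ)).toNat) := hMmono hb
  rw [hMb] at this
  exact this trivial

/-- One direction of the uniqueness: `M j ∩ W k ≤ M' j`, by induction on `k`. -/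
private lemma oneDir (W : ℤ → Submodule K V)
    (hWinc : ∀ k : ℤ, W k ≤ W (k + 1))
    (hWbot : ∃ a : ℤ, W a = ⊥) (hWtop : ∃ b : ℤ, W b = ⊤)
    (N : Module.End K V)
    (hpres : ∀ j : ℤ, (W j).map N ≤ W j)
    (M M' : ℤ → Submodule K V)
    (hM : IsRelWeightFilt N W M) (hM' : IsRelWeightFilt N W M') :
    ∀ j : ℤ, M j ≤ M' j := by
  obtain ⟨hM1, ⟨aM, haM⟩, ⟨bM, hbM⟩, hN2, hax⟩ := hM
  obtain ⟨hM1', ⟨aM', haM'⟩, ⟨bM', hbM'⟩, hN2', hax'⟩ := hM'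
  obtain ⟨aW, haW⟩ := hWbot
  obtain ⟨bW, hbW⟩ := hWtop
  have hWmono : Monotone W := monotone_int_of_le_succ hWinc
  have hMmono : Monotone M := monotone_int_of_le_succ hM1
  have hM'mono : Monotone M' := monotone_int_of_le_succ hM1'
  have hax1 : ∀ k j : ℤ, 0 ≤ j → ∀ v ∈ M (k + j) ⊓ W k ⊔ W (k - 1),
      (N ^ j.toNat) v ∈ M (k - j - 1) ⊓ W k ⊔ W (k - 1) →
      v ∈ M (k + j - 1) ⊓ W k ⊔ W (k - 1) := fun k j hj => ((hax k).2 j hj).1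
  have hax2 : ∀ k j : ℤ, 0 ≤ j → M (k - j) ⊓ W k ⊔ W (k - 1) ≤
      (M (k + j) ⊓ W k ⊔ W (k - 1)).map (N ^ j.toNat) ⊔
        (M (k - j - 1) ⊓ W k ⊔ W (k - 1)) := fun k j hj => ((hax k).2 j hj).2
  have hax1' : ∀ k j : ℤ, 0 ≤ j → ∀ v ∈ M' (k + j) ⊓ W k ⊔ W (k - 1),
      (N ^ j.toNat) v ∈ M' (k - j - 1) ⊓ W k ⊔ W (k - 1) →
      v ∈ M' (k + j - 1) ⊓ W k ⊔ W (k - 1) := fun k j hj => ((hax' k).2 j hj).1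
  suffices H : ∀ (n : ℕ) (k : ℤ), k ≤ aW + n → ∀ j : ℤ, M j ⊓ W k ≤ M' j by
    intro j v hv
    have hvW : v ∈ W bW := by rw [hbW]; trivial
    exact H (bW - aW).toNat bW (by omega) j (Submodule.mem_inf.2 ⟨hv, hvW⟩)
  intro n
  induction n with
  | zero =>
    intro k hk j v hv
    have hk' : k ≤ aW := by push_cast at hk; omega
    have : v ∈ W aW := hWmono hk' (Submodule.mem_inf.1 hv).2
    rw [haW, Submodule.mem_bot] at this
    rw [this]; exact zero_mem _
  | succ n ih =>
    intro k hk j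
    by_cases hk' : k ≤ aW + n
    · exact ih k hk' j
    have hk1 : k - 1 ≤ aW + n := by push_cast at hk; omega
    have Tprev : ∀ j : ℤ, M j ⊓ W (k - 1) ≤ M' j := ih (k - 1) hk1
    set ℓ₀ : ℤ := max (bM' - k) (k - 1 - aM) with hℓ₀
    have A : ∀ (e : ℕ) (ℓ : ℤ), 0 ≤ ℓ → ℓ₀ - e ≤ ℓ →
        (M (k + ℓ) ⊓ W k ≤ M' (k + ℓ)) ∧ (M (k - ℓ - 1) ⊓ W k ≤ M' (k - ℓ - 1)) := by
      intro e
      induction e with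
      | zero =>
        intro ℓ hℓ0 hℓ
        have hℓ' : ℓ₀ ≤ ℓ := by push_cast at hℓ; omega
        constructor
        · have h1 : M' bM' ≤ M' (k + ℓ) := hM'mono (by omega)
          rw [hbM'] at h1
          exact le_trans le_top h1
        · have h1 : M (k - ℓ - 1) ≤ M aM := hMmono (by omega)
          rw [haM] at h1
          exact le_trans (le_trans inf_le_left h1) bot_le
      | succ e ihe =>
        intro ℓ hℓ0 hℓ
        have Hnext := ihe (ℓ + 1) (by omega) (by push_cast at hℓ ⊢; omega)
        have htn : ((ℓ + 1).toNat : ℤ) = ℓ + 1 := Int.toNat_of_nonneg (by omega)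
        constructor
        · -- upper
          intro v hv
          obtain ⟨hvM, hvW⟩ := Submodule.mem_inf.1 hv
          have hN1 : (N ^ (ℓ + 1).toNat) v ∈ M (k - (ℓ + 1) - 1) := by
            have h1 := pow_mem_shift M N hN2 (ℓ + 1).toNat (k + ℓ) v hvM
            have e2 : k + ℓ - 2 * (((ℓ + 1).toNat : ℕ) : ℤ) = k - (ℓ + 1) - 1 := by omega
            rwa [e2] at h1
          have hNW : (N ^ (ℓ + 1).toNat) v ∈ W k := pow_mem_pres W N hpres _ _ _ hvW
          have hN2'' : (N ^ (ℓ + 1).toNat) v ∈ M' (k - (ℓ + 1) - 1) :=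
            Hnext.2 (Submodule.mem_inf.2 ⟨hN1, hNW⟩)
          have hN3 : (N ^ (ℓ + 1).toNat) v ∈ M' (k - ℓ - 2) := by
            have e2 : k - (ℓ + 1) - 1 = k - ℓ - 2 := by ring
            rwa [e2] at hN2''
          exact claimC' W M' N hWmono aW haW hpres hM'mono bM' hbM' hN2' hax1'
            k ℓ hℓ0 v hvW hN3
        · -- lower
          intro v hv
          obtain ⟨hvM, hvW⟩ := Submodule.mem_inf.1 hv
          have hvM2 : v ∈ M (k - (ℓ + 1)) := by
            have e2 : k - (ℓ + 1) = k - ℓ - 1 := by ring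
            rw [e2]; exact hvM
          have hsup := hax2 k (ℓ + 1) (by omega)
            (Submodule.mem_sup_left (Submodule.mem_inf.2 ⟨hvM2, hvW⟩))
          rcases Submodule.mem_sup.1 hsup with ⟨s, hs, t, ht, hst⟩
          rcases Submodule.mem_map.1 hs with ⟨z, hz, hzs⟩
          rcases Submodule.mem_sup.1 hz with ⟨x, hx, w1, hw1, hxw⟩
          rcases Submodule.mem_sup.1 ht with ⟨y, hy, w2, hw2, hyw⟩
          obtain ⟨hxM, hxW⟩ := Submodule.mem_inf.1 hx
          obtain ⟨hyM, hyW⟩ := Submodule.mem_inf.1 hy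
          set nx := (N ^ (ℓ + 1).toNat) x with hnxdef
          set nw1 := (N ^ (ℓ + 1).toNat) w1 with hnw1def
          have hw : nw1 + w2 = v - nx - y := by
            rw [← hst, ← hzs, ← hxw, ← hyw, map_add]
            abel
          have hnxM : nx ∈ M (k - ℓ - 1) := by
            have h1 := pow_mem_shift M N hN2 (ℓ + 1).toNat (k + (ℓ + 1)) x hxM
            have e2 : k + (ℓ + 1) - 2 * (((ℓ + 1).toNat : ℕ) : ℤ) = k - ℓ - 1 := by omega
            rwa [e2] at h1
          have hyM1 : y ∈ M (k - ℓ - 1) := by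
            refine hMmono ?_ hyM
            omega
          have hwMem : nw1 + w2 ∈ M (k - ℓ - 1) := by
            rw [hw]
            exact sub_mem (sub_mem hvM hnxM) hyM1
          have hwW : nw1 + w2 ∈ W (k - 1) :=
            add_mem (pow_mem_pres W N hpres _ _ _ hw1) hw2
          have hwM' : nw1 + w2 ∈ M' (k - ℓ - 1) :=
            Tprev (k - ℓ - 1) (Submodule.mem_inf.2 ⟨hwMem, hwW⟩)
          have hxM' : x ∈ M' (k + (ℓ + 1)) :=
            Hnext.1 (Submodule.mem_inf.2 ⟨hxM, hxW⟩)
          have hnxM' : nx ∈ M' (k - ℓ - 1) := by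
            have h1 := pow_mem_shift M' N hN2' (ℓ + 1).toNat (k + (ℓ + 1)) x hxM'
            have e2 : k + (ℓ + 1) - 2 * (((ℓ + 1).toNat : ℕ) : ℤ) = k - ℓ - 1 := by omega
            rwa [e2] at h1
          have hyM' : y ∈ M' (k - ℓ - 1) := by
            have h1 : y ∈ M' (k - (ℓ + 1) - 1) :=
              Hnext.2 (Submodule.mem_inf.2 ⟨hyM, hyW⟩)
            refine hM'mono ?_ h1
            omega
          have hvsum : v = nx + y + (nw1 + w2) := by rw [hw]; abel
          rw [hvsum]
          exact add_mem (add_mem hnxM' hyM') hwM'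
    intro v hv
    rcases le_or_gt k j with hkj | hkj
    · have h1 := (A (ℓ₀ - (j - k)).toNat (j - k) (by omega) (by omega)).1
      have e : k + (j - k) = j := by ring
      rw [e] at h1
      exact h1 hv
    · have h1 := (A (ℓ₀ - (k - 1 - j)).toNat (k - 1 - j) (by omega) (by omega)).2
      have e : k - (k - 1 - j) - 1 = j := by ring
      rw [e] at h1
      exact h1 hv

/-- Given a finite increasing exhaustive filtration `W` of `V` and a
nilpotent endomorphism `N` preserving `W`, there is at most one relative weight
filtration `M = rel W(N, W)`. -/
theorem stmt_7 [FiniteDimensional K V]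
    (W : ℤ → Submodule K V)
    (hWinc : ∀ k : ℤ, W k ≤ W (k + 1))
    (hWbot : ∃ a : ℤ, W a = ⊥) (hWtop : ∃ b : ℤ, W b = ⊤)
    (N : Module.End K V) (hnil : IsNilpotent N)
    (hpres : ∀ j : ℤ, (W j).map N ≤ W j) :
    ∀ M M' : ℤ → Submodule K V,
      IsRelWeightFilt N W M → IsRelWeightFilt N W M' → M = M' := by
  intro M M' hM hM'
  funext j
  exact le_antisymm (oneDir W hWinc hWbot hWtop N hpres M M' hM hM' j)
    (oneDir W hWinc hWbot hWtop N hpres M' M hM' hM j)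
end
end

section
/- Let F ∈ D with Hodge decomposition V = ⊕_{p+q=k} H^{p,q}, and define g_ℂ := {X ∈ End(V) : Q(Xu, v) + Q(u, Xv) = 0 for all u,v}, g_ℝ := {X ∈ g_ℂ : X(V_ℝ) ⊆ V_ℝ}, g^{p,-p} := {X ∈ g_ℂ : X(H^{r,s}) ⊆ H^{r+p, s-p} for all r+s = k}, and g_ℝ^F := {X ∈ g_ℝ : X(F^p) ⊆ F^p for all p}. Then: (i) g_ℂ = ⊕_p g^{p,-p}; (ii) {X ∈ g_ℂ : X(F^p) ⊆ F^p for all p} = ⊕_{p≥0} g^{p,-p}; and (iii) the subspace 𝒞 := (⊕_{p>0} g^{p,-p}) ⊕ √-1·g_ℝ^F is a real vector space complement to g_ℝ in g_ℂ, i.e. g_ℂ = g_ℝ ⊕ 𝒞 as real vector spaces. -/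
open Submodule

noncomputable section

instance : RingHomSurjective (starRingEnd ℂ) :=
  ⟨fun x => ⟨starRingEnd ℂ x, Complex.conj_conj x⟩⟩

variable {V : Type*} [AddCommGroup V] [Module ℂ V]

/-- A finite decreasing filtration of `V` by complex subspaces. -/
def IsDecFilt (F : ℤ → Submodule ℂ V) : Prop :=
  (∀ p : ℤ, F (p + 1) ≤ F p) ∧ (∃ a : ℤ, F a = ⊤) ∧ ∃ b : ℤ, F b = ⊥

/-- A finite increasing filtration of `V` by complex subspaces. -/
def IsIncFilt (W : ℤ → Submodule ℂ V) : Prop :=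
  (∀ k : ℤ, W k ≤ W (k + 1)) ∧ (∃ a : ℤ, W a = ⊥) ∧ ∃ b : ℤ, W b = ⊤

/-- The Hodge piece `H^{p,k-p} = F^p ∩ conj (F^{k-p})`. -/
def Hdg (σ : V →ₛₗ[starRingEnd ℂ] V) (F : ℤ → Submodule ℂ V) (k p : ℤ) : Submodule ℂ V :=
  F p ⊓ (F (k - p)).map σ

/-- `F` is a pure Hodge structure of weight `k` on `V`:
`V = ⊕_{p+q=k} (F^p ∩ conj (F^q))`. -/
def IsPureHS (σ : V →ₛₗ[starRingEnd ℂ] V) (F : ℤ → Submodule ℂ V) (k : ℤ) : Prop :=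
  DirectSum.IsInternal fun p : ℤ => Hdg σ F k p

/-- `z` is a positive real number (inside `ℂ`). -/
def IsPosReal (z : ℂ) : Prop := 0 < z.re ∧ z.im = 0

/-- `F` belongs to the classifying space `D = D(V, Q, h^{p,k-p})`: it is a decreasing
filtration defining a pure Hodge structure of weight `k` on `V`, polarized by `Q`
(first and second Riemann bilinear relations), with `dim H^{p,k-p} = h p`. -/
def memD (σ : V →ₛₗ[starRingEnd ℂ] V) (Q : V →ₗ[ℂ] V →ₗ[ℂ] ℂ) (k : ℤ) (h : ℤ → ℕ)
    (F : ℤ → Submodule ℂ V) : Prop :=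
  IsDecFilt F ∧ IsPureHS σ F k ∧
  (∀ p : ℤ, ∀ u ∈ F p, ∀ v ∈ F (k - p + 1), Q u v = 0) ∧
  (∀ p : ℤ, ∀ v ∈ Hdg σ F k p, v ≠ 0 →
      IsPosReal (Complex.I ^ (2 * p - k) * Q v (σ v))) ∧
  ∀ p : ℤ, Module.finrank ℂ (Hdg σ F k p) = h p

/-- The subspace of `End(V)` of endomorphisms mapping `P` into `Q`. -/
def mapsInto (P Q : Submodule ℂ V) : Submodule ℂ (Module.End ℂ V) where
  carrier := {α | ∀ v ∈ P, α v ∈ Q}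
  add_mem' := by
    intro a b ha hb v hv
    have h : (a + b) v = a v + b v := rfl
    rw [h]
    exact Q.add_mem (ha v hv) (hb v hv)
  zero_mem' := by
    intro v hv
    show (0 : Module.End ℂ V) v ∈ Q
    simp
  smul_mem' := by
    intro c a ha v hv
    have h : (c • a) v = c • a v := rfl
    rw [h]
    exact Q.smul_mem c (ha v hv)

/-- Conjugation on `End(V)` induced by the conjugation `σ` of `V`:
`α ↦ σ ∘ α ∘ σ`. -/
def conjEnd (σ : V →ₛₗ[starRingEnd ℂ] V) (α : Module.End ℂ V) : Module.End ℂ V where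
  toFun v := σ (α (σ v))
  map_add' x y := by simp
  map_smul' c v := by simp [map_smulₛₗ]

/-- Conjugation on `End(V)` as an antilinear map. -/
def conjEndSL (σ : V →ₛₗ[starRingEnd ℂ] V) :
    Module.End ℂ V →ₛₗ[starRingEnd ℂ] Module.End ℂ V where
  toFun := conjEnd σ
  map_add' α β := by
    ext v
    simp [conjEnd]
  map_smul' c α := by
    ext v
    simp [conjEnd]

/-- `gl(V)^{r,s}` relative to a bigrading `I` of `V`: endomorphisms with
`α(I^{p,q}) ⊆ I^{p+r,q+s}` for all `p, q`. -/
def endShiftI (I : ℤ → ℤ → Submodule ℂ V) (r s : ℤ) : Submodule ℂ (Module.End ℂ V) :=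
  ⨅ pq : ℤ × ℤ, mapsInto (I pq.1 pq.2) (I (pq.1 + r) (pq.2 + s))

/-- The exponential of a (nilpotent) endomorphism of a finite-dimensional space,
as the truncated exponential series. -/
def expEnd [FiniteDimensional ℂ V] (α : Module.End ℂ V) : Module.End ℂ V :=
  ∑ i ∈ Finset.range (Module.finrank ℂ V + 1), ((i.factorial : ℂ)⁻¹) • α ^ i

/-- The Lie algebra `g_ℂ = {X : Q(Xu, v) + Q(u, Xv) = 0}` of infinitesimal isometries
of the bilinear form `Q`. -/
def gC (Q : V →ₗ[ℂ] V →ₗ[ℂ] ℂ) : Submodule ℂ (Module.End ℂ V) where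
  carrier := {X | ∀ u v : V, Q (X u) v + Q u (X v) = 0}
  add_mem' := by
    intro X Y hX hY u v
    have h1 := hX u v
    have h2 := hY u v
    have ha : (X + Y) u = X u + Y u := rfl
    have hb : (X + Y) v = X v + Y v := rfl
    rw [ha, hb, map_add, LinearMap.add_apply, map_add]
    linear_combination h1 + h2
  zero_mem' := by
    intro u v
    show Q ((0 : Module.End ℂ V) u) v + Q u ((0 : Module.End ℂ V) v) = 0
    simp
  smul_mem' := by
    intro c X hX u v
    have h := hX u v
    have ha : (c • X) u = c • X u := rfl
    have hb : (c • X) v = c • X v := rfl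
    rw [ha, hb, map_smul, LinearMap.smul_apply, map_smul]
    simp only [smul_eq_mul]
    linear_combination c * h

/-- `g^{p,-p}`-type condition: `X` shifts the Hodge decomposition by `p`. -/
def hdgShift (σ : V →ₛₗ[starRingEnd ℂ] V) (F : ℤ → Submodule ℂ V) (k p : ℤ) :
    Submodule ℂ (Module.End ℂ V) :=
  ⨅ r : ℤ, mapsInto (Hdg σ F k r) (Hdg σ F k (r + p))

/-- `g^{p,-p} = {X ∈ g_ℂ : X(H^{r,s}) ⊆ H^{r+p,s-p}}`. -/
def gpp (σ : V →ₛₗ[starRingEnd ℂ] V) (Q : V →ₗ[ℂ] V →ₗ[ℂ] ℂ)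
    (F : ℤ → Submodule ℂ V) (k p : ℤ) : Submodule ℂ (Module.End ℂ V) :=
  gC Q ⊓ hdgShift σ F k p


namespace Stmt9

open Module

section Sigma
variable {σ : V →ₛₗ[starRingEnd ℂ] V} (hσ : ∀ v, σ (σ v) = v)
include hσ

lemma mem_map_sigma {A : Submodule ℂ V} {v : V} : v ∈ A.map σ ↔ σ v ∈ A := by
  constructor
  · rintro ⟨u, hu, rfl⟩; rwa [hσ]
  · intro hv; exact ⟨σ v, hv, hσ v⟩

lemma mem_hdg {F : ℤ → Submodule ℂ V} {k p : ℤ} {v : V} :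
    v ∈ Hdg σ F k p ↔ v ∈ F p ∧ σ v ∈ F (k - p) := by
  rw [Hdg, Submodule.mem_inf, mem_map_sigma hσ]

lemma sigma_mem_hdg {F : ℤ → Submodule ℂ V} {k p : ℤ} {v : V}
    (hv : v ∈ Hdg σ F k p) : σ v ∈ Hdg σ F k (k - p) := by
  rw [mem_hdg hσ] at hv ⊢
  refine ⟨hv.2, ?_⟩
  rw [hσ, show k - (k - p) = p by ring]
  exact hv.1

end Sigma

section Eproj

variable (σ : V →ₛₗ[starRingEnd ℂ] V) (F : ℤ → Submodule ℂ V) (k : ℤ)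
  (hDS : IsPureHS σ F k)

/-- projection onto the Hodge piece `Hdg σ F k r`. -/
noncomputable def eproj (r : ℤ) : V →ₗ[ℂ] V :=
  (Hdg σ F k r).subtype ∘ₗ (DFinsupp.lapply r) ∘ₗ
    (LinearEquiv.ofBijective (DirectSum.coeLinearMap _) hDS).symm.toLinearMap

variable {σ F k}

lemma eproj_mem (r : ℤ) (v : V) : eproj σ F k hDS r v ∈ Hdg σ F k r :=
  Submodule.coe_mem _

lemma eproj_same {r : ℤ} {v : V} (hv : v ∈ Hdg σ F k r) : eproj σ F k hDS r v = v := by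
  have := hDS.ofBijective_coeLinearMap_of_mem (i := r) hv
  simp only [eproj, LinearMap.coe_comp, Function.comp_apply, LinearEquiv.coe_coe,
    DFinsupp.lapply_apply, Submodule.coe_subtype]
  erw [this]

lemma eproj_ne {r s : ℤ} {v : V} (hv : v ∈ Hdg σ F k s) (hrs : r ≠ s) :
    eproj σ F k hDS r v = 0 := by
  have := hDS.ofBijective_coeLinearMap_of_mem_ne (i := s) (j := r) (Ne.symm hrs) hv
  simp only [eproj, LinearMap.coe_comp, Function.comp_apply, LinearEquiv.coe_coe,
    DFinsupp.lapply_apply, Submodule.coe_subtype]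
  erw [this]
  rfl

lemma eproj_bot {r : ℤ} (hbot : Hdg σ F k r = ⊥) (v : V) : eproj σ F k hDS r v = 0 := by
  have := eproj_mem hDS r v
  rwa [hbot, Submodule.mem_bot] at this

include hDS in
/-- extensionality on Hodge pieces -/
lemma ext_on_hdg {W : Type*} [AddCommGroup W] [Module ℂ W] {f g : V →ₗ[ℂ] W}
    (h : ∀ r : ℤ, ∀ w ∈ Hdg σ F k r, f w = g w) : f = g := by
  ext v
  have hv : v ∈ ⨆ r : ℤ, Hdg σ F k r := by
    rw [hDS.submodule_iSup_eq_top]; trivial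
  refine Submodule.iSup_induction (x := v) (fun r : ℤ => Hdg σ F k r) hv
    (fun i x hx => h i x hx) (by simp) ?_
  intro x y hx hy
  simp [map_add, hx, hy]

end Eproj

section Endproj

variable {σ : V →ₛₗ[starRingEnd ℂ] V} {F : ℤ → Submodule ℂ V} {k : ℤ}
  (hDS : IsPureHS σ F k)
  {S : Finset ℤ} (hS : ∀ r : ℤ, r ∉ S → Hdg σ F k r = ⊥)

include hS in
lemma sum_eproj (v : V) : ∑ r ∈ S, eproj σ F k hDS r v = v := by
  have h : (∑ r ∈ S, eproj σ F k hDS r) = LinearMap.id := by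
    refine ext_on_hdg hDS ?_
    intro b w hw
    rw [LinearMap.sum_apply, LinearMap.id_apply]
    rw [Finset.sum_eq_single b (fun r _ hr => eproj_ne hDS hw hr)
      (fun hb => by rw [(hS b hb ▸ hw : w ∈ (⊥ : Submodule ℂ V)).out]; simp)]
    exact eproj_same hDS hw
  calc ∑ r ∈ S, eproj σ F k hDS r v = (∑ r ∈ S, eproj σ F k hDS r) v := by
        rw [LinearMap.sum_apply]
    _ = v := by rw [h]; rfl

variable (S) in
/-- the degree-`p` component of an endomorphism. -/
noncomputable def endproj (p : ℤ) : Module.End ℂ V →ₗ[ℂ] Module.End ℂ V where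
  toFun X := ∑ r ∈ S, eproj σ F k hDS (r + p) ∘ₗ X ∘ₗ eproj σ F k hDS r
  map_add' X Y := by
    rw [← Finset.sum_add_distrib]
    refine Finset.sum_congr rfl fun r _ => ?_
    ext v; simp
  map_smul' c X := by
    rw [RingHom.id_apply, Finset.smul_sum]
    refine Finset.sum_congr rfl fun r _ => ?_
    ext v; simp

include hS in
lemma endproj_apply {p : ℤ} {X : Module.End ℂ V} {b : ℤ} {w : V} (hw : w ∈ Hdg σ F k b) :
    endproj hDS S p X w = eproj σ F k hDS (b + p) (X w) := by
  show (∑ r ∈ S, eproj σ F k hDS (r + p) ∘ₗ X ∘ₗ eproj σ F k hDS r) w = _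
  rw [LinearMap.sum_apply]
  rw [Finset.sum_eq_single b
    (fun r _ hr => by simp [eproj_ne hDS hw hr])
    (fun hb => by rw [(hS b hb ▸ hw : w ∈ (⊥ : Submodule ℂ V)).out]; simp)]
  simp [eproj_same hDS hw]

lemma mem_mapsInto {P Q' : Submodule ℂ V} {X : Module.End ℂ V} :
    X ∈ mapsInto P Q' ↔ ∀ v ∈ P, X v ∈ Q' := Iff.rfl

lemma mem_hdgShift {p : ℤ} {X : Module.End ℂ V} :
    X ∈ hdgShift σ F k p ↔ ∀ r : ℤ, ∀ v ∈ Hdg σ F k r, X v ∈ Hdg σ F k (r + p) := by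
  simp only [hdgShift, Submodule.mem_iInf]
  exact Iff.rfl

include hS in
lemma endproj_mem_shift (p : ℤ) (X : Module.End ℂ V) :
    endproj hDS S p X ∈ hdgShift σ F k p := by
  rw [mem_hdgShift]
  intro r v hv
  rw [endproj_apply hDS hS hv]
  exact eproj_mem hDS _ _

include hS in
lemma endproj_of_shift_same {p : ℤ} {X : Module.End ℂ V} (hX : X ∈ hdgShift σ F k p) :
    endproj hDS S p X = X := by
  refine ext_on_hdg hDS fun b w hw => ?_
  rw [endproj_apply hDS hS hw]
  exact eproj_same hDS (mem_hdgShift.mp hX b w hw)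

include hS in
lemma endproj_of_shift_ne {p q : ℤ} {X : Module.End ℂ V} (hX : X ∈ hdgShift σ F k q)
    (hpq : p ≠ q) : endproj hDS S p X = 0 := by
  refine ext_on_hdg hDS fun b w hw => ?_
  rw [endproj_apply hDS hS hw]
  exact eproj_ne hDS (mem_hdgShift.mp hX b w hw) (fun hc => hpq (by omega))

include hS in
lemma shift_le_ker {p q : ℤ} (hpq : q ≠ p) :
    hdgShift σ F k q ≤ LinearMap.ker (endproj hDS S p) := fun X hX =>
  LinearMap.mem_ker.mpr (endproj_of_shift_ne hDS hS hX (Ne.symm hpq))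

include hS in
lemma endproj_not_T {T : Finset ℤ} (hT : ∀ a ∈ S, ∀ b ∈ S, a - b ∈ T) {p : ℤ}
    (hp : p ∉ T) (X : Module.End ℂ V) : endproj hDS S p X = 0 := by
  refine ext_on_hdg hDS fun b w hw => ?_
  rw [endproj_apply hDS hS hw, LinearMap.zero_apply]
  by_cases hb : b + p ∈ S
  · by_cases hbS : b ∈ S
    · exact absurd (by simpa using hT _ hb _ hbS) hp
    · rw [(hS b hbS ▸ hw : w ∈ (⊥ : Submodule ℂ V)).out]; simp
  · exact eproj_bot hDS (hS _ hb) _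

include hS in
lemma sum_endproj {T : Finset ℤ} (hT : ∀ a ∈ S, ∀ b ∈ S, a - b ∈ T)
    (X : Module.End ℂ V) : ∑ p ∈ T, endproj hDS S p X = X := by
  refine ext_on_hdg hDS fun b w hw => ?_
  rw [LinearMap.sum_apply]
  have h1 : ∀ p ∈ T, endproj hDS S p X w = eproj σ F k hDS (b + p) (X w) :=
    fun p _ => endproj_apply hDS hS hw
  rw [Finset.sum_congr rfl h1]
  by_cases hbS : b ∈ S
  · have h2 : ∑ p ∈ T, eproj σ F k hDS (b + p) (X w)
        = ∑ s ∈ T.image (fun p => b + p), eproj σ F k hDS s (X w) :=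
      (Finset.sum_image (f := fun s => eproj σ F k hDS s (X w)) (g := fun p => b + p)
        (fun x _ y _ h => add_left_cancel h)).symm
    have hsub : S ⊆ T.image (fun p => b + p) :=
      fun s hs => Finset.mem_image.mpr ⟨s - b, hT s hs b hbS, by ring⟩
    have h3 : ∑ s ∈ T.image (fun p => b + p), eproj σ F k hDS s (X w)
        = ∑ s ∈ S, eproj σ F k hDS s (X w) :=
      (Finset.sum_subset hsub (fun s _ hs => eproj_bot hDS (hS s hs) _)).symm
    rw [h2, h3, sum_eproj hDS hS (X w)]
  · rw [(hS b hbS ▸ hw : w ∈ (⊥ : Submodule ℂ V)).out]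
    simp

end Endproj

section QC

variable {σ : V →ₛₗ[starRingEnd ℂ] V} {Q : V →ₗ[ℂ] V →ₗ[ℂ] ℂ}

lemma mem_gC {X : Module.End ℂ V} :
    X ∈ gC Q ↔ ∀ u v : V, Q (X u) v + Q u (X v) = 0 := Iff.rfl

lemma q_conj [Module ℚ V] [IsScalarTower ℚ ℂ V] (hσ : ∀ v, σ (σ v) = v)
    {VQ : Submodule ℚ V}
    (hQform : ∃ s : Set V, span ℚ s = VQ ∧ LinearIndependent ℂ ((↑) : s → V) ∧
      span ℂ s = ⊤)
    (hfix : ∀ v ∈ VQ, σ v = v)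
    (hQrat : ∀ u ∈ VQ, ∀ v ∈ VQ, ∃ q : ℚ, Q u v = (q : ℂ)) :
    ∀ u v : V, Q (σ u) (σ v) = starRingEnd ℂ (Q u v) := by
  obtain ⟨s, hs1, -, hs3⟩ := hQform
  have hsVQ : s ⊆ (VQ : Set V) := hs1 ▸ Submodule.subset_span
  intro u v
  have hu : u ∈ span ℂ s := hs3 ▸ Submodule.mem_top
  have hv : v ∈ span ℂ s := hs3 ▸ Submodule.mem_top
  induction hu using Submodule.span_induction with
  | mem x hxs =>
    induction hv using Submodule.span_induction with
    | mem y hys =>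
      obtain ⟨q, hq⟩ := hQrat x (hsVQ hxs) y (hsVQ hys)
      rw [hfix x (hsVQ hxs), hfix y (hsVQ hys), hq]
      simp
    | zero => simp
    | add y z _ _ ihy ihz => simp only [map_add, LinearMap.add_apply, ihy, ihz]
    | smul c y _ ih => simp only [map_smulₛₗ, map_smul, LinearMap.smul_apply, ih,
        smul_eq_mul, map_mul, Complex.conj_conj, RingHom.id_apply]
  | zero => simp
  | add x y _ _ ihx ihy => simp only [map_add, LinearMap.add_apply, ihx, ihy]
  | smul c x _ ih => simp only [map_smulₛₗ, map_smul, LinearMap.smul_apply, ih,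
      smul_eq_mul, map_mul, Complex.conj_conj, RingHom.id_apply]

variable {F : ℤ → Submodule ℂ V} {k : ℤ}

/-- Orthogonality of Hodge pieces whose degrees don't sum to `k`. -/
lemma q_orth (hσ : ∀ v, σ (σ v) = v)
    (hdec : ∀ p : ℤ, F (p + 1) ≤ F p)
    (hrel : ∀ p : ℤ, ∀ u ∈ F p, ∀ v ∈ F (k - p + 1), Q u v = 0)
    (hconj : ∀ u v : V, Q (σ u) (σ v) = starRingEnd ℂ (Q u v)) :
    ∀ a b : ℤ, a + b ≠ k → ∀ u ∈ Hdg σ F k a, ∀ v ∈ Hdg σ F k b, Q u v = 0 := by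
  have hanti : ∀ st tt : ℤ, st ≤ tt → F tt ≤ F st := fun st =>
    Int.le_induction le_rfl (fun t _ ih => le_trans (hdec t) ih)
  have key : ∀ a b : ℤ, a + b > k → ∀ u ∈ Hdg σ F k a, ∀ v ∈ Hdg σ F k b, Q u v = 0 := by
    intro a b hab u hu v hv
    exact hrel a u ((mem_hdg hσ).mp hu).1 v (hanti _ _ (by omega) ((mem_hdg hσ).mp hv).1)
  intro a b hab u hu v hv
  rcases lt_or_gt_of_ne hab with hlt | hgt
  · have h1 : Q u v = starRingEnd ℂ (Q (σ u) (σ v)) := by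
      rw [hconj, Complex.conj_conj]
    rw [h1, key (k - a) (k - b) (by omega) _ (sigma_mem_hdg hσ hu) _ (sigma_mem_hdg hσ hv)]
    simp
  · exact key a b hgt u hu v hv

end QC

section GC1

variable {σ : V →ₛₗ[starRingEnd ℂ] V} {F : ℤ → Submodule ℂ V} {k : ℤ}
  {Q : V →ₗ[ℂ] V →ₗ[ℂ] ℂ}
  (hDS : IsPureHS σ F k)
  {S : Finset ℤ} (hS : ∀ r : ℤ, r ∉ S → Hdg σ F k r = ⊥)
  (horth : ∀ a b : ℤ, a + b ≠ k → ∀ u ∈ Hdg σ F k a, ∀ v ∈ Hdg σ F k b, Q u v = 0)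

include hS horth in
lemma q_eproj_left (w : V) {b : ℤ} {v : V} (hv : v ∈ Hdg σ F k b) :
    Q (eproj σ F k hDS (k - b) w) v = Q w v := by
  conv_rhs => rw [← sum_eproj hDS hS w]
  rw [map_sum, LinearMap.sum_apply]
  exact (Finset.sum_eq_single (k - b)
    (fun s _ hs => horth s b (by omega) _ (eproj_mem hDS s w) v hv)
    (fun hbs => by rw [eproj_bot hDS (hS _ hbs)]; simp)).symm

include hS horth in
lemma q_eproj_right {a : ℤ} {u : V} (hu : u ∈ Hdg σ F k a) (w : V) :
    Q u (eproj σ F k hDS (k - a) w) = Q u w := by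
  conv_rhs => rw [← sum_eproj hDS hS w]
  rw [map_sum]
  exact (Finset.sum_eq_single (k - a)
    (fun s _ hs => horth a s (by omega) u hu _ (eproj_mem hDS s w))
    (fun hbs => by rw [eproj_bot hDS (hS _ hbs)]; simp)).symm

include hS horth in
lemma gc_endproj {X : Module.End ℂ V} (hX : X ∈ gC Q) (p : ℤ) :
    endproj hDS S p X ∈ gC Q := by
  rw [mem_gC]
  have hmem : ∀ w : V, w ∈ ⨆ r : ℤ, Hdg σ F k r := fun w => by
    rw [hDS.submodule_iSup_eq_top]; trivial
  intro u v
  refine Submodule.iSup_induction (x := u) (fun r : ℤ => Hdg σ F k r) (hmem u)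
    (motive := fun u => ∀ v, Q (endproj hDS S p X u) v + Q u (endproj hDS S p X v) = 0)
    ?_ ?_ ?_ v
  · intro a x hx
    intro v
    refine Submodule.iSup_induction (x := v) (fun r : ℤ => Hdg σ F k r) (hmem v)
      (motive := fun v => Q (endproj hDS S p X x) v + Q x (endproj hDS S p X v) = 0)
      ?_ (by simp) ?_
    · intro b y hy
      rw [endproj_apply hDS hS hx, endproj_apply hDS hS hy]
      by_cases hk : a + p = k - b
      · rw [hk, q_eproj_left hDS hS horth _ hy,
          show b + p = k - a by omega, q_eproj_right hDS hS horth hx]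
        exact hX x y
      · rw [horth _ _ (by omega) _ (eproj_mem hDS _ _) y hy,
          horth _ _ (by omega) x hx _ (eproj_mem hDS _ _), add_zero]
    · intro y z hy hz
      simp only [map_add, LinearMap.add_apply] at hy hz ⊢
      linear_combination hy + hz
  · simp
  · intro x y hx hy v
    simp only [map_add, LinearMap.add_apply] at hx hy ⊢
    linear_combination hx v + hy v

include hS horth in
lemma gpp_endproj {X : Module.End ℂ V} (hX : X ∈ gC Q) (p : ℤ) :
    endproj hDS S p X ∈ gpp σ Q F k p :=
  ⟨gc_endproj hDS hS horth hX p, endproj_mem_shift hDS hS p X⟩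

include hDS hS horth in
lemma goal1_sup {T : Finset ℤ} (hT : ∀ a ∈ S, ∀ b ∈ S, a - b ∈ T) :
    (⨆ p : ℤ, gpp σ Q F k p) = gC Q := by
  refine le_antisymm (iSup_le fun p => inf_le_left) fun X hX => ?_
  rw [← sum_endproj hDS hS hT X]
  exact sum_mem fun p _ =>
    le_iSup (fun p => gpp σ Q F k p) p (gpp_endproj hDS hS horth hX p)

include hDS hS in
lemma goal1_indep (p : ℤ) :
    gpp σ Q F k p ⊓ (⨆ (q : ℤ) (_ : q ≠ p), gpp σ Q F k q) = ⊥ := by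
  rw [eq_bot_iff]
  rintro X ⟨hX1, hX2⟩
  have h1 : endproj hDS S p X = X := endproj_of_shift_same hDS hS hX1.2
  have h2 : X ∈ LinearMap.ker (endproj hDS S p) := by
    refine (iSup_le fun q => iSup_le fun hq =>
      le_trans inf_le_right (shift_le_ker hDS hS hq)) hX2
  rw [Submodule.mem_bot, ← h1]
  exact LinearMap.mem_ker.mp h2

end GC1

section Filt

variable {σ : V →ₛₗ[starRingEnd ℂ] V} {F : ℤ → Submodule ℂ V} {k : ℤ}
  {Q : V →ₗ[ℂ] V →ₗ[ℂ] ℂ}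
  (hσ : ∀ v, σ (σ v) = v)
  (hDS : IsPureHS σ F k)
  {S : Finset ℤ} (hS : ∀ r : ℤ, r ∉ S → Hdg σ F k r = ⊥)
  (hdec : ∀ p : ℤ, F (p + 1) ≤ F p)
  (hrel : ∀ p : ℤ, ∀ u ∈ F p, ∀ v ∈ F (k - p + 1), Q u v = 0)
  (hpos : ∀ p : ℤ, ∀ v ∈ Hdg σ F k p, v ≠ 0 →
      IsPosReal (Complex.I ^ (2 * p - k) * Q v (σ v)))

include hdec in
lemma F_anti : ∀ st tt : ℤ, st ≤ tt → F tt ≤ F st := fun st =>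
  Int.le_induction le_rfl (fun t _ ih => le_trans (hdec t) ih)

include hσ hDS hS hdec hrel hpos in
lemma filt_eq_sup (ha0 : ∃ a : ℤ, F a = ⊤) :
    ∀ r : ℤ, F r = ⨆ (a : ℤ) (_ : r ≤ a), Hdg σ F k a := by
  obtain ⟨a0, ha0⟩ := ha0
  -- small Hodge pieces vanish
  have hbot : ∀ x : ℤ, x < a0 → Hdg σ F k x = ⊥ := by
    intro x hx
    have h1 : Hdg σ F k x ≤ Hdg σ F k (x + 1) := by
      intro v hv
      rw [mem_hdg hσ] at hv ⊢
      have htop : F (x + 1) = ⊤ :=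
        le_antisymm le_top (ha0 ▸ F_anti hdec (x + 1) a0 (by omega))
      exact ⟨by rw [htop]; trivial, F_anti hdec (k - (x + 1)) (k - x) (by omega) hv.2⟩
    have h2 : Disjoint (Hdg σ F k x) (Hdg σ F k (x + 1)) :=
      hDS.submodule_iSupIndep.pairwiseDisjoint (by omega : x ≠ x + 1)
    exact (h2.eq_bot_of_le h1)
  have base : ∀ r : ℤ, r ≤ a0 → F r = ⨆ (a : ℤ) (_ : r ≤ a), Hdg σ F k a := by
    intro r hr
    have h1 : F r = ⊤ := le_antisymm le_top (ha0 ▸ F_anti hdec _ _ hr)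
    rw [h1, eq_comm, eq_top_iff, ← hDS.submodule_iSup_eq_top]
    refine iSup_le fun a => ?_
    by_cases har : r ≤ a
    · exact le_iSup₂ (f := fun (a : ℤ) (_ : r ≤ a) => Hdg σ F k a) a har
    · rw [hbot a (by omega)]; exact bot_le
  have step : ∀ r : ℤ, a0 ≤ r → F r = ⨆ (a : ℤ) (_ : r ≤ a), Hdg σ F k a →
      F (r + 1) = ⨆ (a : ℤ) (_ : r + 1 ≤ a), Hdg σ F k a := by
    intro r _ ih
    have hge : (⨆ (a : ℤ) (_ : r + 1 ≤ a), Hdg σ F k a) ≤ F (r + 1) :=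
      iSup₂_le fun a ha => le_trans inf_le_left (F_anti hdec _ _ ha)
    refine le_antisymm ?_ hge
    intro v hv
    have hvr : v ∈ F r := hdec r hv
    -- components of v below r vanish
    have hlow : ∀ b : ℤ, b < r → eproj σ F k hDS b v = 0 := by
      intro b hb
      have : F r ≤ LinearMap.ker (eproj σ F k hDS b) := by
        rw [ih]
        exact iSup₂_le fun a ha => fun x hx =>
          LinearMap.mem_ker.mpr (eproj_ne hDS hx (by omega))
      exact LinearMap.mem_ker.mp (this hvr)
    set w := ∑ a ∈ S.filter (fun a => r + 1 ≤ a), eproj σ F k hDS a v with hw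
    have hwmem : w ∈ ⨆ (a : ℤ) (_ : r + 1 ≤ a), Hdg σ F k a := by
      refine sum_mem fun a ha => ?_
      have := (Finset.mem_filter.mp ha).2
      exact le_iSup₂ (f := fun (a : ℤ) (_ : r + 1 ≤ a) => Hdg σ F k a) a this
        (eproj_mem hDS a v)
    have hsplit : v = w + eproj σ F k hDS r v := by
      conv_lhs => rw [← sum_eproj hDS hS v]
      rw [hw, ← Finset.sum_filter_add_sum_filter_not S (fun a => r + 1 ≤ a)]
      congr 1
      refine Finset.sum_eq_single r (fun b hb hbr => hlow b ?_) (fun hr => ?_)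
      · have := (Finset.mem_filter.mp hb).2; omega
      · by_cases hrS : r ∈ S
        · exact absurd (Finset.mem_filter.mpr ⟨hrS, by omega⟩) hr
        · exact eproj_bot hDS (hS r hrS) v
    set u := eproj σ F k hDS r v with hu
    have huF : u ∈ F (r + 1) := by
      have : u = v - w := by rw [hsplit]; abel
      rw [this]
      exact Submodule.sub_mem _ hv (hge hwmem)
    have huH : u ∈ Hdg σ F k r := eproj_mem hDS r v
    have hu0 : u = 0 := by
      by_contra hne
      have hq : Q u (σ u) = 0 := by
        refine hrel (r + 1) u huF (σ u) ?_
        rw [show k - (r + 1) + 1 = k - r by ring]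
        exact ((mem_hdg hσ).mp huH).2
      have := hpos r u huH hne
      rw [hq, mul_zero] at this
      have h0 : (0:ℝ) < 0 := by simpa using this.1
      exact lt_irrefl 0 h0
    rw [hsplit, hu0, add_zero]
    exact hwmem
  intro r
  rcases le_or_gt r a0 with h | h
  · exact base r h
  · have : ∀ n : ℤ, a0 ≤ n → F n = ⨆ (a : ℤ) (_ : n ≤ a), Hdg σ F k a :=
      Int.le_induction (base a0 le_rfl) step
    exact this r (by omega)

end Filt

section Goal2

variable {σ : V →ₛₗ[starRingEnd ℂ] V} {F : ℤ → Submodule ℂ V} {k : ℤ}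
  {Q : V →ₗ[ℂ] V →ₗ[ℂ] ℂ}
  (hDS : IsPureHS σ F k)
  {S : Finset ℤ} (hS : ∀ r : ℤ, r ∉ S → Hdg σ F k r = ⊥)
  (horth : ∀ a b : ℤ, a + b ≠ k → ∀ u ∈ Hdg σ F k a, ∀ v ∈ Hdg σ F k b, Q u v = 0)
  (hdec : ∀ p : ℤ, F (p + 1) ≤ F p)
  (hLF : ∀ r : ℤ, F r = ⨆ (a : ℤ) (_ : r ≤ a), Hdg σ F k a)

include hdec hLF in
lemma shift_stab {p : ℤ} (hp : 0 ≤ p) {X : Module.End ℂ V}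
    (hX : X ∈ hdgShift σ F k p) : ∀ r : ℤ, ∀ v ∈ F r, X v ∈ F r := by
  intro r v hv
  rw [hLF r] at hv
  have : (⨆ (a : ℤ) (_ : r ≤ a), Hdg σ F k a) ≤ Submodule.comap X (F r) := by
    refine iSup₂_le fun a ha => fun x hx => Submodule.mem_comap.mpr ?_
    exact F_anti hdec r (a + p) (by omega) (le_trans inf_le_left
      (F_anti hdec (a + p) (a + p) le_rfl) (mem_hdgShift.mp hX a x hx))
  exact this hv

include hDS hS hdec hLF in
lemma endproj_neg_eq_zero {p : ℤ} (hp : p < 0) {X : Module.End ℂ V}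
    (hX : ∀ r : ℤ, ∀ v ∈ F r, X v ∈ F r) : endproj hDS S p X = 0 := by
  refine ext_on_hdg hDS fun b w hw => ?_
  rw [endproj_apply hDS hS hw, LinearMap.zero_apply]
  have hXw : X w ∈ F b := hX b w ((inf_le_left : Hdg σ F k b ≤ F b) hw)
  have hker : F b ≤ LinearMap.ker (eproj σ F k hDS (b + p)) := by
    rw [hLF b]
    exact iSup₂_le fun a ha => fun x hx =>
      LinearMap.mem_ker.mpr (eproj_ne hDS hx (by omega))
  exact LinearMap.mem_ker.mp (hker hXw)

include hDS hS horth hdec hLF in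
lemma goal2 {T : Finset ℤ} (hT : ∀ a ∈ S, ∀ b ∈ S, a - b ∈ T) :
    gC Q ⊓ (⨅ p : ℤ, mapsInto (F p) (F p)) = ⨆ (p : ℤ) (_ : 0 ≤ p), gpp σ Q F k p := by
  refine le_antisymm ?_ ?_
  · rintro X ⟨hX1, hX2⟩
    have hstab : ∀ r : ℤ, ∀ v ∈ F r, X v ∈ F r := fun r =>
      mem_mapsInto.mp ((Submodule.mem_iInf _).mp hX2 r)
    rw [← sum_endproj hDS hS hT X]
    refine sum_mem fun p _ => ?_
    by_cases hp : 0 ≤ p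
    · exact le_iSup₂ (f := fun (p : ℤ) (_ : 0 ≤ p) => gpp σ Q F k p) p hp
        (gpp_endproj hDS hS horth hX1 p)
    · rw [endproj_neg_eq_zero hDS hS hdec hLF (by omega) hstab]
      exact Submodule.zero_mem _
  · refine iSup₂_le fun p hp => fun X hX => ?_
    exact ⟨hX.1, (Submodule.mem_iInf _).mpr fun r =>
      mem_mapsInto.mpr fun v hv => shift_stab hdec hLF hp hX.2 r v hv⟩

end Goal2

section Conj

variable {σ : V →ₛₗ[starRingEnd ℂ] V} {F : ℤ → Submodule ℂ V} {k : ℤ}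
  {Q : V →ₗ[ℂ] V →ₗ[ℂ] ℂ}
  (hσ : ∀ v, σ (σ v) = v)
  (hDS : IsPureHS σ F k)
  {S : Finset ℤ} (hS : ∀ r : ℤ, r ∉ S → Hdg σ F k r = ⊥)
  (hSsym : ∀ r : ℤ, r ∈ S → k - r ∈ S)

lemma conjEnd_apply (X : Module.End ℂ V) (v : V) : conjEnd σ X v = σ (X (σ v)) := rfl

lemma conjEnd_add (X Y : Module.End ℂ V) :
    conjEnd σ (X + Y) = conjEnd σ X + conjEnd σ Y := by
  ext v; simp [conjEnd_apply]

lemma conjEnd_sub (X Y : Module.End ℂ V) :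
    conjEnd σ (X - Y) = conjEnd σ X - conjEnd σ Y := by
  ext v; simp [conjEnd_apply]

lemma conjEnd_smul (c : ℂ) (X : Module.End ℂ V) :
    conjEnd σ (c • X) = starRingEnd ℂ c • conjEnd σ X := by
  ext v; simp [conjEnd_apply, map_smulₛₗ]

lemma conjEnd_zero : conjEnd σ (0 : Module.End ℂ V) = 0 := by
  ext v; simp [conjEnd_apply]

include hσ in
lemma conjEnd_conjEnd (X : Module.End ℂ V) : conjEnd σ (conjEnd σ X) = X := by
  ext v; simp [conjEnd_apply, hσ]

include hσ in
lemma real_decomp (v : V) : ∃ a b : V, σ a = a ∧ σ b = b ∧ v = a + Complex.I • b := by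
  refine ⟨(2⁻¹ : ℂ) • (v + σ v), (-(2⁻¹) * Complex.I) • (v - σ v), ?_, ?_, ?_⟩
  · rw [map_smulₛₗ, map_add, hσ]
    rw [show (starRingEnd ℂ) (2⁻¹ : ℂ) = (2⁻¹ : ℂ) by simp [Complex.ext_iff]]
    rw [add_comm]
  · rw [map_smulₛₗ, map_sub, hσ]
    rw [show (starRingEnd ℂ) (-(2⁻¹) * Complex.I) = (-(2⁻¹) * Complex.I) * (-1) by
      simp [Complex.ext_iff]]
    rw [mul_smul]
    congr 1
    rw [neg_one_smul, neg_sub]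
  · rw [smul_smul]
    rw [show Complex.I * (-(2⁻¹) * Complex.I) = (2⁻¹ : ℂ) by
      rw [mul_comm, mul_assoc, Complex.I_mul_I]; ring]
    rw [smul_add, smul_sub]
    module

include hσ in
lemma real_iff_conjEnd {X : Module.End ℂ V} :
    (∀ v : V, σ v = v → σ (X v) = X v) ↔ conjEnd σ X = X := by
  constructor
  · intro h
    ext v
    obtain ⟨a, b, hsa, hsb, hv⟩ := real_decomp hσ v
    have hXa : σ (X a) = X a := h a hsa
    have hXb : σ (X b) = X b := h b hsb
    have hσv : σ (a + Complex.I • b) = a - Complex.I • b := by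
      rw [map_add, map_smulₛₗ, hsa, hsb, Complex.conj_I, neg_smul, ← sub_eq_add_neg]
    show σ (X (σ v)) = X v
    rw [hv, hσv]
    have h1 : X (a - Complex.I • b) = X a - Complex.I • X b := by rw [map_sub, map_smul]
    rw [h1, map_sub, map_smulₛₗ, hXa, hXb, Complex.conj_I, neg_smul, sub_neg_eq_add]
    rw [map_add, map_smul]
  · intro h v hv
    conv_lhs => rw [show X v = X (σ v) by rw [hv]]
    show conjEnd σ X v = X v
    rw [h]

include hσ in
lemma conjEnd_mem_gC (hconj : ∀ u v : V, Q (σ u) (σ v) = starRingEnd ℂ (Q u v))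
    {X : Module.End ℂ V} (hX : X ∈ gC Q) : conjEnd σ X ∈ gC Q := by
  rw [mem_gC]
  intro u v
  have h1 : Q (conjEnd σ X u) v = starRingEnd ℂ (Q (X (σ u)) (σ v)) := by
    conv_lhs => rw [show v = σ (σ v) from (hσ v).symm]
    exact hconj _ _
  have h2 : Q u (conjEnd σ X v) = starRingEnd ℂ (Q (σ u) (X (σ v))) := by
    conv_lhs => rw [show u = σ (σ u) from (hσ u).symm]
    exact hconj _ _
  rw [h1, h2, ← map_add]
  rw [mem_gC] at hX
  rw [hX (σ u) (σ v)]
  simp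

include hσ hS in
lemma eproj_conj (r : ℤ) (v : V) :
    σ (eproj σ F k hDS r v) = eproj σ F k hDS (k - r) (σ v) := by
  conv_rhs => rw [← sum_eproj hDS hS v, map_sum, map_sum]
  symm
  refine (Finset.sum_eq_single r ?_ ?_).trans
    (eproj_same hDS (sigma_mem_hdg hσ (eproj_mem hDS r v)))
  · intro s _ hs
    exact eproj_ne hDS (sigma_mem_hdg hσ (eproj_mem hDS s v)) (by omega)
  · intro hr
    rw [eproj_bot hDS (hS r hr), map_zero, map_zero]

end Conj

section CE

variable {σ : V →ₛₗ[starRingEnd ℂ] V} {F : ℤ → Submodule ℂ V} {k : ℤ}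
  {Q : V →ₗ[ℂ] V →ₗ[ℂ] ℂ}
  (hσ : ∀ v, σ (σ v) = v)
  (hDS : IsPureHS σ F k)
  {S : Finset ℤ} (hS : ∀ r : ℤ, r ∉ S → Hdg σ F k r = ⊥)

include hσ hS in
lemma ce_endproj (p : ℤ) (X : Module.End ℂ V) :
    conjEnd σ (endproj hDS S p X) = endproj hDS S (-p) (conjEnd σ X) := by
  refine ext_on_hdg hDS fun b w hw => ?_
  have h1 : conjEnd σ (endproj hDS S p X) w
      = σ (eproj σ F k hDS (k - b + p) (X (σ w))) := by
    rw [conjEnd_apply, endproj_apply hDS hS (sigma_mem_hdg hσ hw)]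
  rw [h1, eproj_conj hσ hDS hS, endproj_apply hDS hS hw,
    show k - (k - b + p) = b + -p by ring]
  rfl

variable (hdec : ∀ p : ℤ, F (p + 1) ≤ F p)
  (hLF : ∀ r : ℤ, F r = ⨆ (a : ℤ) (_ : r ≤ a), Hdg σ F k a)

include hσ hDS hdec hLF hS in
lemma zero_decomp {T : Finset ℤ} (hT : ∀ a ∈ S, ∀ b ∈ S, a - b ∈ T)
    {A B C : Module.End ℂ V}
    (hcA : conjEnd σ A = A)
    (hB : B ∈ ⨆ (p : ℤ) (_ : 0 < p), gpp σ Q F k p)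
    (hcC : conjEnd σ C = C)
    (hCF : ∀ r : ℤ, ∀ v ∈ F r, C v ∈ F r)
    (heq : A + B + Complex.I • C = 0) : A = 0 ∧ B = 0 ∧ C = 0 := by
  have hBker : ∀ q : ℤ, q ≤ 0 → endproj hDS S q B = 0 := by
    intro q hq
    have hle : (⨆ (p : ℤ) (_ : 0 < p), gpp σ Q F k p) ≤ LinearMap.ker (endproj hDS S q) :=
      iSup₂_le fun p hp => le_trans inf_le_right (shift_le_ker hDS hS (by omega))
    exact LinearMap.mem_ker.mp (hle hB)
  have hCneg : ∀ q : ℤ, q < 0 → endproj hDS S q C = 0 := fun q hq =>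
    endproj_neg_eq_zero hDS hS hdec hLF hq hCF
  have hcomp : ∀ q : ℤ, endproj hDS S q A + endproj hDS S q B
      + Complex.I • endproj hDS S q C = 0 := by
    intro q
    have := congrArg (endproj hDS S q) heq
    rwa [map_add, map_add, map_smul, map_zero] at this
  have hAneg : ∀ q : ℤ, q < 0 → endproj hDS S q A = 0 := by
    intro q hq
    have := hcomp q
    rwa [hBker q (by omega), hCneg q hq, smul_zero, add_zero, add_zero] at this
  have hAq : ∀ q : ℤ, q ≠ 0 → endproj hDS S q A = 0 := by
    intro q hq
    rcases lt_or_gt_of_ne hq with h | h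
    · exact hAneg q h
    · have h2 := ce_endproj hσ hDS hS (-q) A
      rw [hAneg (-q) (by omega), conjEnd_zero, neg_neg] at h2
      rw [← hcA]
      exact h2.symm
  have hCq : ∀ q : ℤ, q ≠ 0 → endproj hDS S q C = 0 := by
    intro q hq
    rcases lt_or_gt_of_ne hq with h | h
    · exact hCneg q h
    · have h2 := ce_endproj hσ hDS hS (-q) C
      rw [hCneg (-q) (by omega), conjEnd_zero, neg_neg] at h2
      rw [← hcC]
      exact h2.symm
  have hB0 : B = 0 := by
    rw [← sum_endproj hDS hS hT B]
    refine Finset.sum_eq_zero fun q _ => ?_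
    rcases le_or_gt q 0 with h | h
    · exact hBker q h
    · have := hcomp q
      rwa [hAq q (by omega), hCq q (by omega), smul_zero, add_zero, zero_add] at this
  have hAC : A + Complex.I • C = 0 := by
    have := heq
    rwa [hB0, add_zero] at this
  have hAC2 : A - Complex.I • C = 0 := by
    have h2 := congrArg (conjEnd σ) hAC
    rwa [conjEnd_add, conjEnd_smul, hcA, hcC, Complex.conj_I, neg_smul,
      ← sub_eq_add_neg, conjEnd_zero] at h2
  have hA0 : A = 0 := by
    have h2A : (2 : ℂ) • A = 0 := by
      rw [two_smul]
      calc A + A = (A + Complex.I • C) + (A - Complex.I • C) := by abel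
        _ = 0 := by rw [hAC, hAC2, add_zero]
    rcases smul_eq_zero.mp h2A with h | h
    · exact absurd h (by norm_num)
    · exact h
  have hC0 : C = 0 := by
    have hIC : Complex.I • C = 0 := by
      have := hAC
      rwa [hA0, zero_add] at this
    rcases smul_eq_zero.mp hIC with h | h
    · exact absurd h Complex.I_ne_zero
    · exact h
  exact ⟨hA0, hB0, hC0⟩

end CE

end Stmt9

open Stmt9

/-- For `F ∈ D`: (i) `g_ℂ = ⊕_p g^{p,-p}`; (ii) the stabilizer
subalgebra of `F` in `g_ℂ` is `⊕_{p ≥ 0} g^{p,-p}`; (iii) the subspace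
`𝒞 = (⊕_{p>0} g^{p,-p}) ⊕ i·g_ℝ^F` is a real complement to `g_ℝ` in `g_ℂ` (every
`X ∈ g_ℂ` decomposes uniquely). -/
theorem stmt_9 [FiniteDimensional ℂ V] [Module ℚ V] [IsScalarTower ℚ ℂ V]
    (σ : V →ₛₗ[starRingEnd ℂ] V) (hσ : ∀ v, σ (σ v) = v)
    (VQ : Submodule ℚ V)
    (hQform : ∃ s : Set V, span ℚ s = VQ ∧ LinearIndependent ℂ ((↑) : s → V) ∧
      span ℂ s = ⊤)
    (hfix : ∀ v ∈ VQ, σ v = v)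
    (k : ℤ) (Q : V →ₗ[ℂ] V →ₗ[ℂ] ℂ)
    (hQrat : ∀ u ∈ VQ, ∀ v ∈ VQ, ∃ q : ℚ, Q u v = (q : ℂ))
    (hQnd : ∀ u : V, (∀ v : V, Q u v = 0) → u = 0)
    (hQpar : ∀ u v : V, Q u v = (-1 : ℂ) ^ k * Q v u)
    (h : ℤ → ℕ) (hsupp : (Function.support h).Finite)
    (hsum : ∑ᶠ p : ℤ, h p = Module.finrank ℂ V)
    (F : ℤ → Submodule ℂ V) (hF : memD σ Q k h F) :
    ((⨆ p : ℤ, gpp σ Q F k p) = gC Q ∧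
      ∀ p : ℤ, gpp σ Q F k p ⊓ (⨆ (q : ℤ) (_ : q ≠ p), gpp σ Q F k q) = ⊥) ∧
    (gC Q ⊓ (⨅ p : ℤ, mapsInto (F p) (F p)) = ⨆ (p : ℤ) (_ : 0 ≤ p), gpp σ Q F k p) ∧
    ∀ X ∈ gC Q,
      ∃! d : Module.End ℂ V × Module.End ℂ V × Module.End ℂ V,
        d.1 ∈ gC Q ∧ (∀ v : V, σ v = v → σ (d.1 v) = d.1 v) ∧
        d.2.1 ∈ (⨆ (p : ℤ) (_ : 0 < p), gpp σ Q F k p) ∧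
        (d.2.2 ∈ gC Q ∧ (∀ v : V, σ v = v → σ (d.2.2 v) = d.2.2 v) ∧
          ∀ p : ℤ, ∀ v ∈ F p, d.2.2 v ∈ F p) ∧
        X = d.1 + d.2.1 + Complex.I • d.2.2 := by
  obtain ⟨⟨hdec, hatop, -⟩, hDS, hrel, hpos, hrank⟩ := hF
  set S : Finset ℤ := hsupp.toFinset with hSdef
  have hS : ∀ r : ℤ, r ∉ S → Hdg σ F k r = ⊥ := by
    intro r hr
    have h0 : h r = 0 := by
      by_contra hc
      exact hr (hsupp.mem_toFinset.mpr hc)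
    exact Submodule.finrank_eq_zero.mp (by rw [hrank r, h0])
  set T : Finset ℤ := (Finset.image₂ (fun a b : ℤ => a - b) S S) ∪ {0} with hTdef
  have hT : ∀ a ∈ S, ∀ b ∈ S, a - b ∈ T := fun a ha b hb =>
    Finset.mem_union_left _ (Finset.mem_image₂_of_mem ha hb)
  have hT0 : (0 : ℤ) ∈ T := Finset.mem_union_right _ (Finset.mem_singleton_self 0)
  have hconj : ∀ u v : V, Q (σ u) (σ v) = starRingEnd ℂ (Q u v) :=
    q_conj hσ hQform hfix hQrat
  have horth := q_orth hσ hdec hrel hconj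
  have hLF := filt_eq_sup hσ hDS hS hdec hrel hpos hatop
  refine ⟨⟨goal1_sup hDS hS horth hT, fun p => goal1_indep hDS hS p⟩,
    goal2 hDS hS horth hdec hLF hT, ?_⟩
  intro X hX
  -- Existence: construct the decomposition
  set Xc : Module.End ℂ V := conjEnd σ X with hXcdef
  have hXc_gc : Xc ∈ gC Q := conjEnd_mem_gC hσ hconj hX
  set M : Module.End ℂ V := ∑ p ∈ T.filter (fun p => p < 0), endproj hDS S p X with hMdef
  set P : Module.End ℂ V := ∑ p ∈ T.filter (fun p => 0 < p), endproj hDS S p X with hPdef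
  set X0 : Module.End ℂ V := endproj hDS S 0 X with hX0def
  set cM : Module.End ℂ V := conjEnd σ M with hcMdef
  set cX0 : Module.End ℂ V := conjEnd σ X0 with hcX0def
  have hsplit : X = M + X0 + P := by
    conv_lhs => rw [← sum_endproj hDS hS hT X]
    rw [← Finset.sum_filter_add_sum_filter_not T (fun p => p < 0)]
    rw [add_assoc]
    congr 1
    have h0mem : (0 : ℤ) ∈ T.filter (fun p => ¬ p < 0) :=
      Finset.mem_filter.mpr ⟨hT0, by omega⟩
    rw [Finset.sum_eq_sum_sdiff_singleton_add h0mem]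
    have hseteq : (T.filter (fun p => ¬ p < 0)) \ {0} = T.filter (fun p => 0 < p) := by
      ext q
      simp only [Finset.mem_sdiff, Finset.mem_filter, Finset.mem_singleton]
      constructor
      · rintro ⟨⟨h1, h2⟩, h3⟩; exact ⟨h1, by omega⟩
      · rintro ⟨h1, h2⟩; exact ⟨⟨h1, by omega⟩, by omega⟩
    rw [hseteq, add_comm]
  have hcM : cM = ∑ p ∈ T.filter (fun p => p < 0), endproj hDS S (-p) Xc := by
    rw [hcMdef, hMdef]
    rw [show conjEnd σ (∑ p ∈ T.filter (fun p => p < 0), endproj hDS S p X)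
        = ∑ p ∈ T.filter (fun p => p < 0), conjEnd σ (endproj hDS S p X) from
      map_sum (conjEndSL σ) _ _]
    exact Finset.sum_congr rfl fun p _ => ce_endproj hσ hDS hS p X
  have hcX0 : cX0 = endproj hDS S 0 Xc := by
    have h2 := ce_endproj hσ hDS hS 0 X
    rwa [neg_zero] at h2
  have hM_gc : M ∈ gC Q := sum_mem fun p _ => gc_endproj hDS hS horth hX p
  have hcM_gc : cM ∈ gC Q := by
    rw [hcM]
    exact sum_mem fun p _ => gc_endproj hDS hS horth hXc_gc (-p)
  have hcM_mem : cM ∈ ⨆ (p : ℤ) (_ : 0 < p), gpp σ Q F k p := by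
    rw [hcM]
    refine sum_mem fun p hp => ?_
    have hpneg : p < 0 := (Finset.mem_filter.mp hp).2
    exact le_iSup₂ (f := fun (p : ℤ) (_ : 0 < p) => gpp σ Q F k p) (-p) (by omega)
      (gpp_endproj hDS hS horth hXc_gc (-p))
  have hP_mem : P ∈ ⨆ (p : ℤ) (_ : 0 < p), gpp σ Q F k p := by
    refine sum_mem fun p hp => ?_
    have hppos : 0 < p := (Finset.mem_filter.mp hp).2
    exact le_iSup₂ (f := fun (p : ℤ) (_ : 0 < p) => gpp σ Q F k p) p hppos
      (gpp_endproj hDS hS horth hX p)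
  have hX0_gc : X0 ∈ gC Q := gc_endproj hDS hS horth hX 0
  have hcX0_gc : cX0 ∈ gC Q := by
    rw [hcX0]; exact gc_endproj hDS hS horth hXc_gc 0
  set A : Module.End ℂ V := M + cM + (2⁻¹ : ℂ) • (X0 + cX0) with hAdef
  set B : Module.End ℂ V := P - cM with hBdef
  set C : Module.End ℂ V := (-(2⁻¹) * Complex.I) • (X0 - cX0) with hCdef
  have hA_gc : A ∈ gC Q :=
    add_mem (add_mem hM_gc hcM_gc) (smul_mem _ _ (add_mem hX0_gc hcX0_gc))
  have hB_mem : B ∈ ⨆ (p : ℤ) (_ : 0 < p), gpp σ Q F k p := sub_mem hP_mem hcM_mem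
  have hC_gc : C ∈ gC Q := smul_mem _ _ (sub_mem hX0_gc hcX0_gc)
  have hA_ce : conjEnd σ A = A := by
    rw [hAdef, conjEnd_add, conjEnd_add, conjEnd_smul, conjEnd_add,
      ← hcMdef, ← hcX0def, conjEnd_conjEnd hσ, conjEnd_conjEnd hσ,
      show (starRingEnd ℂ) (2⁻¹ : ℂ) = (2⁻¹ : ℂ) by simp [Complex.ext_iff]]
    module
  have hC_ce : conjEnd σ C = C := by
    rw [hCdef, conjEnd_smul, conjEnd_sub, ← hcX0def, conjEnd_conjEnd hσ,
      show (starRingEnd ℂ) (-(2⁻¹) * Complex.I) = (2⁻¹ : ℂ) * Complex.I by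
        simp [Complex.ext_iff]]
    module
  have hC_shift : C ∈ hdgShift σ F k 0 := by
    refine smul_mem _ _ (sub_mem (endproj_mem_shift hDS hS 0 X) ?_)
    rw [hcX0]
    exact endproj_mem_shift hDS hS 0 Xc
  have hCF : ∀ r : ℤ, ∀ v ∈ F r, C v ∈ F r := shift_stab hdec hLF le_rfl hC_shift
  have hsum : X = A + B + Complex.I • C := by
    rw [hAdef, hBdef, hCdef, smul_smul,
      show Complex.I * (-(2⁻¹) * Complex.I) = (2⁻¹ : ℂ) by
        rw [mul_comm, mul_assoc, Complex.I_mul_I]; ring]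
    rw [hsplit]
    module
  refine ⟨(A, B, C), ⟨hA_gc, (real_iff_conjEnd hσ).mpr hA_ce, hB_mem,
    ⟨hC_gc, (real_iff_conjEnd hσ).mpr hC_ce, fun p v hv => hCF p v hv⟩, hsum⟩, ?_⟩
  rintro ⟨A', B', C'⟩ ⟨hA'_gc, hA'_real, hB'_mem, ⟨hC'_gc, hC'_real, hC'F⟩, hsum'⟩
  have hz := zero_decomp hσ hDS hS hdec hLF hT (A := A' - A) (B := B' - B) (C := C' - C)
    (by rw [conjEnd_sub, (real_iff_conjEnd hσ).mp hA'_real, hA_ce])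
    (sub_mem hB'_mem hB_mem)
    (by rw [conjEnd_sub, (real_iff_conjEnd hσ).mp hC'_real, hC_ce])
    (fun r v hv => by
      have h1 : (C' - C) v = C' v - C v := rfl
      rw [h1]
      exact Submodule.sub_mem _ (hC'F r v hv) (hCF r v hv))
    (by
      rw [smul_sub]
      calc A' - A + (B' - B) + (Complex.I • C' - Complex.I • C)
          = (A' + B' + Complex.I • C') - (A + B + Complex.I • C) := by abel
        _ = X - X := by rw [← hsum', ← hsum]
        _ = 0 := sub_self X)
  refine Prod.ext ?_ (Prod.ext ?_ ?_)
  · exact sub_eq_zero.mp hz.1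
  · exact sub_eq_zero.mp hz.2.1
  · exact sub_eq_zero.mp hz.2.2
end
end
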